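/- The Coburn alternative fails on the Hartogs triangle: the symbol φ(ζ) := ζ̄₁ ζ₂³ ∈ L^∞(𝕋ⁿ) is nonzero, the constant function 1 belongs to H²(∂_d△ₙ), and T_{φ,△ₙ}(1) = 0 as well as (T_{φ,△ₙ})*(1) = T_{φ̄,△ₙ}(1) = 0; hence neither T_{φ,△ₙ} nor its adjoint is injective. -/

import Mathlib

open MeasureTheory Filter Topology ComplexConjugate

noncomputable section

instance fact_one_pos : Fact ((0:ℝ) < 1) := ⟨one_pos⟩

abbrev Torus (n : ℕ) := Fin n → AddCircle (1 : ℝ)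

abbrev L2T (n : ℕ) := Lp ℂ 2 (volume : Measure (Torus n))

abbrev LinfT (n : ℕ) := Lp ℂ ⊤ (volume : Measure (Torus n))

def char {n : ℕ} (α : Fin n → ℤ) : Torus n → ℂ := fun x => ∏ j, fourier (α j) (x j)

lemma char_continuous {n : ℕ} (α : Fin n → ℤ) : Continuous (char α) :=
  continuous_finset_prod _ fun j _ => (fourier (α j)).continuous.comp (continuous_apply j)

lemma char_memLp {n : ℕ} (α : Fin n → ℤ) (p : ENNReal) :
    MemLp (char α) p (volume : Measure (Torus n)) := by
  refine (memLp_top_of_bound ((char_continuous α).aestronglyMeasurable) 1 ?_).mono_exponent le_top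
  filter_upwards with x
  simp only [char, norm_prod]
  calc ∏ j, ‖fourier (α j) (x j)‖
      = ∏ j : Fin n, (1:ℝ) := by
        refine Finset.prod_congr rfl fun j _ => ?_
        rw [fourier_apply]; exact Circle.norm_coe _
    _ ≤ 1 := by simp

def charL2 {n : ℕ} (α : Fin n → ℤ) : L2T n := (char_memLp α 2).toLp (char α)

def hardyT (n : ℕ) : Submodule ℂ (L2T n) :=
  (Submodule.span ℂ
    (charL2 '' {α : Fin n → ℤ | ∀ k : Fin n, 0 ≤ (∑ j ∈ Finset.Iic k, α j) + (k.val : ℤ)})).topologicalClosure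

def hardyD (n : ℕ) : Submodule ℂ (L2T n) :=
  (Submodule.span ℂ (charL2 '' {α : Fin n → ℤ | ∀ j, 0 ≤ α j})).topologicalClosure

instance hardyT.completeSpace (n : ℕ) : CompleteSpace (hardyT n) :=
  (Submodule.isClosed_topologicalClosure _).completeSpace_coe

instance hardyD.completeSpace (n : ℕ) : CompleteSpace (hardyD n) :=
  (Submodule.isClosed_topologicalClosure _).completeSpace_coe

def IsToeplitzOn {n : ℕ} (K : Submodule ℂ (L2T n)) (φ : Torus n → ℂ) (T : K →L[ℂ] K) : Prop :=
  ∀ f g : K,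
    (inner ℂ ((g : L2T n)) ((T f : L2T n)) : ℂ) =
      ∫ x, conj ((g : L2T n) x) * (φ x * (f : L2T n) x) ∂volume

def IsCoordMult {n : ℕ} (j : Fin n) (M : hardyT n →L[ℂ] hardyT n) : Prop :=
  ∀ f : hardyT n,
    ((M f : L2T n) : Torus n → ℂ) =ᵐ[volume]
      fun x => fourier 1 (x j) * ((f : L2T n) : Torus n → ℂ) x

def IsHankelT {n : ℕ} (φ : Torus n → ℂ) (H : hardyT n →L[ℂ] L2T n) : Prop :=
  (∀ f : hardyT n, H f ∈ (hardyT n)ᗮ) ∧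
    ∀ f : hardyT n, ∀ g : L2T n, g ∈ (hardyT n)ᗮ →
      (inner ℂ g (H f) : ℂ) = ∫ x, conj (g x) * (φ x * (f : L2T n) x) ∂volume

def IsAnalyticSymbolF {n : ℕ} (φ : Torus n → ℂ) : Prop :=
  ∀ α : Fin n → ℤ, (¬ ∀ k : Fin n, 0 ≤ ∑ j ∈ Finset.Iic k, α j) →
    ∫ x, φ x * char (-α) x ∂(volume : Measure (Torus n)) = 0

def IsInnerSymbolF {n : ℕ} (φ : Torus n → ℂ) : Prop :=
  IsAnalyticSymbolF φ ∧ ∀ᵐ x ∂(volume : Measure (Torus n)), ‖φ x‖ = 1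

def tauMap {n : ℕ} (x : Torus n) : Torus n := fun j => ∑ k ∈ Finset.Ici j, x k

def sigmaMap {n : ℕ} (x : Torus n) : Torus n :=
  fun j => if h : (j : ℕ) + 1 < n then x j - x ⟨(j : ℕ) + 1, h⟩ else x j

def jacF {n : ℕ} (x : Torus n) : ℂ := ∏ j : Fin n, fourier (j.val : ℤ) (x j)

def jacInvF {n : ℕ} (x : Torus n) : ℂ :=
  ∏ j : Fin n, fourier (if j.val = 0 then (0 : ℤ) else -1) (x j)

/-- The symbol `ζ̄₁ ζ₂³`. -/
def coburnSymbol (n : ℕ) : Torus n → ℂ :=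
  char (fun j => if j.val = 0 then (-1 : ℤ) else if j.val = 1 then 3 else 0)

/-! The multiplier `φ = ζ̄₁ ζ₂³` sends `1` to the character with exponent `(-1, 3, 0, …, 0)`,
which violates the first Hartogs inequality `α₁ ≥ 0`, and `φ̄` sends it to `(1, -3, 0, …, 0)`,
which violates the second, `α₁ + α₂ + 1 ≥ 0`. Characters are orthonormal, so both products are
orthogonal to `H²(∂_d△ₙ)` and both Toeplitz operators annihilate `1`. Since `T_φ̄ = T_φ*`, neither
`T_φ` nor its adjoint is injective. -/

instance : IsProbabilityMeasure (volume : Measure (AddCircle (1 : ℝ))) :=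
  ⟨by rw [AddCircle.measure_univ, ENNReal.ofReal_one]⟩

lemma conj_char {n : ℕ} (α : Fin n → ℤ) (x : Torus n) : conj (char α x) = char (-α) x := by
  simp only [char, map_prod, Pi.neg_apply, fourier_neg]

lemma char_mul_char {n : ℕ} (α β : Fin n → ℤ) (x : Torus n) :
    char α x * char β x = char (α + β) x := by
  simp only [char, ← Finset.prod_mul_distrib, Pi.add_apply, fourier_add]

lemma char_ne_zero {n : ℕ} (α : Fin n → ℤ) (x : Torus n) : char α x ≠ 0 :=
  Finset.prod_ne_zero_iff.mpr fun j _ => by rw [fourier_apply]; exact Circle.coe_ne_zero _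

lemma char_not_ae_eq_zero {n : ℕ} (α : Fin n → ℤ) : ¬ char α =ᵐ[volume] fun _ => (0 : ℂ) :=
  fun h => let ⟨x, hx⟩ := h.exists; char_ne_zero α x hx

lemma char_zero {n : ℕ} : char (0 : Fin n → ℤ) = fun _ => 1 := by
  ext x
  simp [char]

lemma integral_fourier_unitAddCircle (m : ℤ) :
    ∫ x : AddCircle (1 : ℝ), fourier m x = if m = 0 then 1 else 0 := by
  split_ifs with h
  · simp [h]
  · exact integral_eq_zero_of_add_right_eq_neg (fourier_add_half_inv_index h one_pos)

lemma integral_char {n : ℕ} (α : Fin n → ℤ) :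
    ∫ x, char α x = if α = 0 then 1 else 0 := by
  simp only [char]
  rw [volume_pi, integral_fintype_prod_eq_prod (f := fun j z => fourier (α j) z)]
  simp_rw [integral_fourier_unitAddCircle]
  by_cases h : α = 0
  · simp [h]
  · obtain ⟨j, hj⟩ := Function.ne_iff.mp h
    rw [if_neg h]
    exact Finset.prod_eq_zero (Finset.mem_univ j) (if_neg hj)

lemma charL2_ae_eq {n : ℕ} (α : Fin n → ℤ) : (charL2 α : Torus n → ℂ) =ᵐ[volume] char α :=
  (char_memLp α 2).coeFn_toLp

lemma inner_charL2 {n : ℕ} (α β : Fin n → ℤ) :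
    inner ℂ (charL2 α) (charL2 β) = if α = β then (1 : ℂ) else 0 := by
  have hprod : (fun x => inner ℂ (charL2 α x) (charL2 β x)) =ᵐ[volume] char (β - α) := by
    filter_upwards [charL2_ae_eq α, charL2_ae_eq β] with x hα hβ
    rw [RCLike.inner_apply', hα, hβ, conj_char, char_mul_char, neg_add_eq_sub]
  rw [L2.inner_def, integral_congr_ae hprod, integral_char]
  simp [sub_eq_zero, eq_comm]

/-- The index set `𝓘`; here `k` is zero-based, so `k.val` stands for the paper's `k - 1`. -/
def IsHartogsIndex {n : ℕ} (α : Fin n → ℤ) : Prop :=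
  ∀ k : Fin n, 0 ≤ (∑ j ∈ Finset.Iic k, α j) + (k.val : ℤ)

lemma charL2_mem_hardyT {n : ℕ} {α : Fin n → ℤ} (hα : IsHartogsIndex α) :
    charL2 α ∈ hardyT n :=
  Submodule.le_topologicalClosure _ (Submodule.subset_span ⟨α, hα, rfl⟩)

lemma charL2_mem_orthogonal_hardyT {n : ℕ} {α : Fin n → ℤ} (hα : ¬ IsHartogsIndex α) :
    charL2 α ∈ (hardyT n)ᗮ := by
  rw [hardyT, Submodule.orthogonal_closure, ← Submodule.span_singleton_le_iff_mem,
    ← Submodule.isOrtho_iff_le, Submodule.isOrtho_comm, Submodule.isOrtho_span]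
  rintro _ ⟨β, hβ, rfl⟩ _ rfl
  rw [inner_charL2, if_neg]
  rintro rfl
  exact hα hβ

lemma IsToeplitzOn.adjoint_eq {n : ℕ} {K : Submodule ℂ (L2T n)} [CompleteSpace K]
    {φ : Torus n → ℂ} {T S : K →L[ℂ] K} (hT : IsToeplitzOn K φ T)
    (hS : IsToeplitzOn K (fun x => conj (φ x)) S) : S = ContinuousLinearMap.adjoint T := by
  rw [ContinuousLinearMap.eq_adjoint_iff]
  intro f g
  rw [Submodule.coe_inner, Submodule.coe_inner, ← inner_conj_symm, hS f g, hT g f,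
    ← integral_conj]
  congr 1 with x
  simp only [map_mul, Complex.conj_conj]
  ring

lemma IsToeplitzOn.apply_eq_zero_of_mul_mem_orthogonal {n : ℕ} {K : Submodule ℂ (L2T n)}
    {φ : Torus n → ℂ} {T : K →L[ℂ] K} (hT : IsToeplitzOn K φ T) {f : K} {g : L2T n} (hg : g ∈ Kᗮ)
    (hfg : (g : Torus n → ℂ) =ᵐ[volume] fun x => φ x * (f : L2T n) x) : T f = 0 := by
  have hself : inner ℂ (T f : L2T n) (T f : L2T n) = 0 := by
    rw [hT f (T f), ← Submodule.inner_right_of_mem_orthogonal (T f).2 hg, L2.inner_def]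
    refine integral_congr_ae ?_
    filter_upwards [hfg] with x hx
    rw [RCLike.inner_apply', hx]
  exact Subtype.ext (inner_self_eq_zero.mp hself)

lemma IsToeplitzOn.apply_eq_zero_of_ae_eq_one {n : ℕ} {α : Fin n → ℤ} (hα : ¬ IsHartogsIndex α)
    {T : hardyT n →L[ℂ] hardyT n} (hT : IsToeplitzOn (hardyT n) (char α) T) {e : hardyT n}
    (he : ((e : L2T n) : Torus n → ℂ) =ᵐ[volume] fun _ => 1) : T e = 0 :=
  hT.apply_eq_zero_of_mul_mem_orthogonal (charL2_mem_orthogonal_hardyT hα) <| by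
    filter_upwards [charL2_ae_eq α, he] with x hαx hex
    rw [hαx, hex, mul_one]

def hardyOne (n : ℕ) : hardyT n :=
  ⟨charL2 0, charL2_mem_hardyT fun k => by simp⟩

lemma hardyOne_ae_eq_one (n : ℕ) :
    ((hardyOne n : L2T n) : Torus n → ℂ) =ᵐ[volume] fun _ => 1 :=
  (charL2_ae_eq 0).trans (.of_eq char_zero)

lemma ne_zero_of_ae_eq_one {n : ℕ} {K : Submodule ℂ (L2T n)} {e : K}
    (he : ((e : L2T n) : Torus n → ℂ) =ᵐ[volume] fun _ => 1) : e ≠ 0 := by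
  rintro rfl
  obtain ⟨x, hx⟩ := (he.symm.trans (Lp.coeFn_zero ℂ 2 volume)).exists
  exact one_ne_zero hx

def coburnIndex (n : ℕ) : Fin n → ℤ := fun j => if j.val = 0 then -1 else if j.val = 1 then 3 else 0

lemma coburnSymbol_eq_char (n : ℕ) : coburnSymbol n = char (coburnIndex n) := rfl

lemma conj_coburnSymbol (n : ℕ) : (fun x => conj (coburnSymbol n x)) = char (-coburnIndex n) :=
  funext (conj_char _)

lemma not_isHartogsIndex_coburnIndex {n : ℕ} (hn : 0 < n) : ¬ IsHartogsIndex (coburnIndex n) := by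
  intro h
  have hIic : Finset.Iic (⟨0, hn⟩ : Fin n) = {⟨0, hn⟩} := by
    ext j
    simp only [Finset.mem_Iic, Finset.mem_singleton, Fin.le_def, Fin.ext_iff]
    omega
  simpa [hIic, coburnIndex] using h ⟨0, hn⟩

lemma not_isHartogsIndex_neg_coburnIndex {n : ℕ} (hn : 2 ≤ n) :
    ¬ IsHartogsIndex (-coburnIndex n) := by
  intro h
  have hIic : Finset.Iic (⟨1, hn⟩ : Fin n) = {⟨0, by omega⟩, ⟨1, hn⟩} := by
    ext j
    simp only [Finset.mem_Iic, Finset.mem_insert, Finset.mem_singleton, Fin.le_def, Fin.ext_iff]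
    omega
  simpa [hIic, coburnIndex] using h ⟨1, hn⟩

/-- The Coburn alternative fails on the Hartogs triangle: for `φ = ζ̄₁ ζ₂³`, the symbol is
nonzero, `1 ∈ H²(∂_d△ₙ)`, `T_{φ,△ₙ}(1) = 0 = (T_{φ,△ₙ})*(1)`, and neither `T_{φ,△ₙ}` nor
its adjoint is injective. -/
theorem stmt19 {n : ℕ} (hn : 2 ≤ n)
    (T S : hardyT n →L[ℂ] hardyT n)
    (hT : IsToeplitzOn (hardyT n) (coburnSymbol n) T)
    (hS : IsToeplitzOn (hardyT n) (fun x => conj (coburnSymbol n x)) S) :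
    ¬ (coburnSymbol n =ᵐ[volume] fun _ => (0 : ℂ)) ∧
    (∃ e : hardyT n, ((e : L2T n) : Torus n → ℂ) =ᵐ[volume] fun _ => (1 : ℂ)) ∧
    (∀ e : hardyT n, (((e : L2T n) : Torus n → ℂ) =ᵐ[volume] fun _ => (1 : ℂ)) →
      T e = 0 ∧ S e = 0) ∧
    S = ContinuousLinearMap.adjoint T ∧
    ¬ Function.Injective (⇑T) ∧
    ¬ Function.Injective (⇑(ContinuousLinearMap.adjoint T)) := by
  have hadj : S = ContinuousLinearMap.adjoint T := hT.adjoint_eq hS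
  rw [coburnSymbol_eq_char] at hT
  rw [conj_coburnSymbol] at hS
  have hT1 (e : hardyT n) :=
    hT.apply_eq_zero_of_ae_eq_one (e := e) (not_isHartogsIndex_coburnIndex (by omega))
  have hS1 (e : hardyT n) :=
    hS.apply_eq_zero_of_ae_eq_one (e := e) (not_isHartogsIndex_neg_coburnIndex hn)
  have hOne := hardyOne_ae_eq_one n
  refine ⟨char_not_ae_eq_zero _, ⟨hardyOne n, hOne⟩, fun e he => ⟨hT1 e he, hS1 e he⟩, hadj,
    fun hinj => ?_, fun hinj => ?_⟩
  · exact ne_zero_of_ae_eq_one hOne ((injective_iff_map_eq_zero T).1 hinj _ (hT1 _ hOne))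
  · rw [← hadj] at hinj
    exact ne_zero_of_ae_eq_one hOne ((injective_iff_map_eq_zero S).1 hinj _ (hS1 _ hOne))
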